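/- Let (β, ω) be a twisted action of an inverse semigroup S on a C*-algebra B. Then for all r, s ∈ S, β_r(D_{r*} ∩ D_s) = D_{rs}. In particular β_{s*} = Ad_{ω(s*,s)} ∘ β_s^{-1}, i.e. β_{s*}(x) = ω(s*,s) β_s^{-1}(x) ω(s*,s)* for x ∈ D_s. -/
import Mathlib


noncomputable section

/-- An inverse semigroup: a semigroup with an involution `star` such that
`s·s*·s = s`, `s*·s·s* = s*`, the involution is an anti-multiplicative involution,
and idempotents commute (equivalently: generalized inverses are unique). -/
class InverseSemigroup (S : Type*) extends Semigroup S, Star S where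
  mul_star_mul : ∀ s : S, s * star s * s = s
  star_mul_star : ∀ s : S, star s * s * star s = star s
  star_star : ∀ s : S, star (star s) = s
  star_mul : ∀ s t : S, star (s * t) = star t * star s
  idem_comm : ∀ e f : S, e * e = e → f * f = f → e * f = f * e

variable {H : Type*} [NormedAddCommGroup H] [InnerProductSpace ℂ H] [CompleteSpace H]

/-- `D` is a closed two-sided ideal of the C*-algebra `Bs ⊆ B(H)`. -/
def IsClosedIdealOf (Bs D : Set (H →L[ℂ] H)) : Prop :=
  D ⊆ Bs ∧ IsClosed D ∧ (0 : H →L[ℂ] H) ∈ D ∧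
  (∀ x ∈ D, ∀ y ∈ D, x + y ∈ D) ∧ (∀ (c : ℂ), ∀ x ∈ D, c • x ∈ D) ∧
  (∀ b ∈ Bs, ∀ x ∈ D, b * x ∈ D ∧ x * b ∈ D)

/-- `u ∈ B(H)` is a unitary multiplier of the ideal `D`: it multiplies `D` into itself
on both sides and `u* u` and `u u*` act as the identity on `D` on both sides. -/
def IsUnitMult (u : H →L[ℂ] H) (D : Set (H →L[ℂ] H)) : Prop :=
  (∀ x ∈ D, u * x ∈ D ∧ x * u ∈ D) ∧
  (∀ x ∈ D, star u * (u * x) = x ∧ u * (star u * x) = x ∧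
    (x * u) * star u = x ∧ (x * star u) * u = x)

/-- A twisted action `(β, ω)` of an inverse semigroup `S` on the C*-algebra
`Bs ⊆ B(H)`: ideals `D s` of `Bs` with dense linear span, ∗-isomorphisms
`β s : D s* → D s`, and unitary multipliers `ω s t` of `D (s t)` satisfying
(i) `β r ∘ β s = Ad_{ω(r,s)} ∘ β (r s)` (including equality of domains);
(ii) the cocycle identity `β r (x ω(s,t)) ω(r,st) = β r (x) ω(r,s) ω(rs,t)`
for `x ∈ D r* ∩ D (st)`;
(iii) `ω(e,f) = 1_{ef}` for idempotents `e, f`, and `ω(r, r*r) = ω(rr*, r) = 1_r`;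
(iv) `ω(s*,e) ω(s*e,s) x = ω(s*,s) x` for idempotent `e` and `x ∈ D (s* e s)`. -/
structure TwistedAction (S : Type*) [InverseSemigroup S]
    (H : Type*) [NormedAddCommGroup H] [InnerProductSpace ℂ H] [CompleteSpace H]
    (Bs : StarSubalgebra ℂ (H →L[ℂ] H)) where
  hBclosed : IsClosed (Bs : Set (H →L[ℂ] H))
  D : S → Set (H →L[ℂ] H)
  hD : ∀ s : S, IsClosedIdealOf (Bs : Set (H →L[ℂ] H)) (D s)
  dense_span : closure (Submodule.span ℂ (⋃ s : S, D s) : Set (H →L[ℂ] H))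
      = (Bs : Set (H →L[ℂ] H))
  β : S → (H →L[ℂ] H) → (H →L[ℂ] H)
  hβ_bij : ∀ s : S, Set.BijOn (β s) (D (star s)) (D s)
  hβ_add : ∀ s : S, ∀ x ∈ D (star s), ∀ y ∈ D (star s), β s (x + y) = β s x + β s y
  hβ_smul : ∀ s : S, ∀ (c : ℂ), ∀ x ∈ D (star s), β s (c • x) = c • β s x
  hβ_mul : ∀ s : S, ∀ x ∈ D (star s), ∀ y ∈ D (star s), β s (x * y) = β s x * β s y
  hβ_star : ∀ s : S, ∀ x ∈ D (star s), β s (star x) = star (β s x)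
  ω : S → S → (H →L[ℂ] H)
  hω : ∀ s t : S, IsUnitMult (ω s t) (D (s * t))
  ax1_dom : ∀ r s : S, {x | x ∈ D (star s) ∧ β s x ∈ D (star r)} = D (star (r * s))
  ax1 : ∀ r s : S, ∀ x ∈ D (star (r * s)),
      β r (β s x) = ω r s * β (r * s) x * star (ω r s)
  ax2 : ∀ r s t : S, ∀ x ∈ D (star r) ∩ D (s * t),
      β r (x * ω s t) * ω r (s * t) = β r x * ω r s * ω (r * s) t
  ax3_idem : ∀ e f : S, e * e = e → f * f = f →
      ∀ x ∈ D (e * f), ω e f * x = x ∧ x * ω e f = x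
  ax3 : ∀ r : S, ∀ x ∈ D r,
      ω r (star r * r) * x = x ∧ x * ω r (star r * r) = x ∧
      ω (r * star r) r * x = x ∧ x * ω (r * star r) r = x
  ax4 : ∀ s e : S, e * e = e → ∀ x ∈ D (star s * e * s),
      ω (star s) e * (ω (star s * e) s * x) = ω (star s) s * x

section Aux

variable {S : Type*} [InverseSemigroup S]

lemma isg_star_star (s : S) : star (star s) = s := InverseSemigroup.star_star s

lemma isg_star_idem {e : S} (he : e * e = e) : star e = e := by
  have hse : star e * star e = star e := by
    have h := InverseSemigroup.star_mul e e
    rw [he] at h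
    exact h.symm
  have hc : e * star e = star e * e :=
    InverseSemigroup.idem_comm e (star e) he hse
  have h1 : e = star e * e := by
    conv_lhs => rw [← InverseSemigroup.mul_star_mul e]
    rw [hc, mul_assoc, he]
  have h2 : star e = star e * e := by
    conv_lhs => rw [← InverseSemigroup.star_mul_star e]
    rw [mul_assoc, hc, ← mul_assoc, hse]
  rw [h2, ← h1]

lemma isg_idem_ss (r : S) : (star r * r) * (star r * r) = star r * r := by
  have h := InverseSemigroup.mul_star_mul r
  calc (star r * r) * (star r * r) = star r * (r * star r * r) := by
        simp only [mul_assoc]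
    _ = star r * r := by rw [h]

variable {H : Type*} [NormedAddCommGroup H] [InnerProductSpace ℂ H] [CompleteSpace H]
  {Bs : StarSubalgebra ℂ (H →L[ℂ] H)} (T : TwistedAction S H Bs)

lemma ta_dom_char (a u : S) :
    T.D (star a * u) = {x | x ∈ T.D (star a) ∧ T.β a x ∈ T.D u} := by
  have h := T.ax1_dom (star u) a
  rw [InverseSemigroup.star_mul, isg_star_star] at h
  exact h.symm

lemma ta_subA (a u : S) : T.D (star a * u) ⊆ T.D (star a) := by
  intro x hx
  rw [ta_dom_char] at hx
  exact hx.1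

lemma ta_memDu (a u : S) {x : H →L[ℂ] H} (hx : x ∈ T.D (star a * u)) :
    T.β a x ∈ T.D u := by
  rw [ta_dom_char] at hx
  exact hx.2

lemma ta_lemA2 (a u : S) : T.β a '' T.D (star a * u) = T.D a ∩ T.D u := by
  ext y
  constructor
  · rintro ⟨x, hx, rfl⟩
    exact ⟨(T.hβ_bij a).mapsTo (ta_subA T a u hx), ta_memDu T a u hx⟩
  · rintro ⟨hy1, hy2⟩
    obtain ⟨x, hx, rfl⟩ := (T.hβ_bij a).surjOn hy1
    refine ⟨x, ?_, rfl⟩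
    rw [ta_dom_char]
    exact ⟨hx, hy2⟩

lemma ta_lemB (a : S) : T.D (star a * a) = T.D (star a) := by
  refine Set.Subset.antisymm (ta_subA T a a) (fun x hx => ?_)
  have h1 : T.β a x ∈ T.D a ∩ T.D a :=
    ⟨(T.hβ_bij a).mapsTo hx, (T.hβ_bij a).mapsTo hx⟩
  rw [← ta_lemA2 T a a] at h1
  obtain ⟨x', hx', hxx⟩ := h1
  have h2 := (T.hβ_bij a).injOn (ta_subA T a a hx') hx hxx
  rwa [← h2]

lemma ta_beta_idem {e : S} (he : e * e = e) :
    ∀ x ∈ T.D e, T.β e x = x := by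
  intro x hx
  have hse : star e = e := isg_star_idem he
  have hxd : x ∈ T.D (star (e * e)) := by rw [he, hse]; exact hx
  have h1 := T.ax1 e e x hxd
  rw [he] at h1
  have hbx : T.β e x ∈ T.D e := (T.hβ_bij e).mapsTo (by rw [hse]; exact hx)
  have hmem : T.β e x ∈ T.D (e * e) := by rw [he]; exact hbx
  have h2 := T.ax3_idem e e he he _ hmem
  have h3 := (T.hω e e).2 _ hmem
  have h4 : T.β e x * star (T.ω e e) = T.β e x := by
    have h5 := h3.2.2.1
    rwa [h2.2] at h5
  have h5 : T.β e (T.β e x) = T.β e x := by rw [h1, h2.1, h4]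
  have hx' : x ∈ T.D (star e) := by rw [hse]; exact hx
  have hbx' : T.β e x ∈ T.D (star e) := by rw [hse]; exact hbx
  exact (T.hβ_bij e).injOn hbx' hx' h5

lemma ta_lemE {e : S} (he : e * e = e) (u : S) :
    T.D (e * u) = T.D e ∩ T.D u := by
  have hse : star e = e := isg_star_idem he
  have h := ta_lemA2 T e u
  rw [hse] at h
  have hsub : T.D (e * u) ⊆ T.D e := by
    have h' := ta_subA T e u
    rwa [hse] at h'
  rw [← h]
  ext y
  constructor
  · intro hy
    exact ⟨y, hy, ta_beta_idem T he y (hsub hy)⟩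
  · rintro ⟨x, hx, rfl⟩
    rwa [ta_beta_idem T he x (hsub hx)]

lemma ta_part1 (r s : S) :
    T.β r '' (T.D (star r) ∩ T.D s) = T.D (r * s) := by
  have hidem : (star r * r) * (star r * r) = star r * r := isg_idem_ss r
  have h1 : T.D (star r) ∩ T.D s = T.D (star r * (r * s)) := by
    rw [← mul_assoc, ta_lemE T hidem s, ta_lemB T r]
  rw [h1, ta_lemA2 T r (r * s)]
  have hsub : T.D (r * s) ⊆ T.D r := by
    have h' := ta_subA T (star r) s
    rwa [isg_star_star] at h'
  exact Set.inter_eq_self_of_subset_right hsub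

lemma ta_part2 (s : S) (x : H →L[ℂ] H) (hx : x ∈ T.D s) (y : H →L[ℂ] H)
    (hy : y ∈ T.D (star s)) (hxy : T.β s y = x) :
    T.β (star s) x = T.ω (star s) s * y * star (T.ω (star s) s) := by
  have hidem := isg_idem_ss s
  have hymem : y ∈ T.D (star s * s) := by rw [ta_lemB T s]; exact hy
  have hyd : y ∈ T.D (star (star s * s)) := by
    rw [InverseSemigroup.star_mul, isg_star_star]
    exact hymem
  have h1 := T.ax1 (star s) s y hyd
  rw [hxy, ta_beta_idem T hidem y hymem] at h1
  exact h1

end Aux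

/-- For a twisted action of an inverse semigroup `S`: `β r (D r* ∩ D s) = D (r s)` for all
`r, s ∈ S`; in particular `β s* = Ad_{ω(s*,s)} ∘ β s⁻¹`, i.e. whenever `x ∈ D s`,
`y ∈ D s*` and `β s y = x` we have `β s* x = ω(s*,s) y ω(s*,s)*`. -/
theorem stmt17 {S : Type*} [InverseSemigroup S]
    {H : Type*} [NormedAddCommGroup H] [InnerProductSpace ℂ H] [CompleteSpace H]
    {Bs : StarSubalgebra ℂ (H →L[ℂ] H)} (T : TwistedAction S H Bs) :
    (∀ r s : S, T.β r '' (T.D (star r) ∩ T.D s) = T.D (r * s)) ∧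
    (∀ s : S, ∀ x ∈ T.D s, ∀ y ∈ T.D (star s), T.β s y = x →
      T.β (star s) x = T.ω (star s) s * y * star (T.ω (star s) s)) :=
  ⟨ta_part1 T, fun s x hx y hy hxy => ta_part2 T s x hx y hy hxy⟩
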